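/- Let G be a connected graph and λ ≠ 0 an eigenvalue of its adjacency matrix. Then m_λ(G) ≤ β'(G) + c(G), where β'(G) is the induced matching number and c(G) = |E(G)| − |V(G)| + 1 is the cyclomatic number. -/

import Mathlib

open Module

attribute [local instance] Classical.propDecidable

noncomputable def adjMat {V : Type*} [Fintype V] (G : SimpleGraph V) : Matrix V V ℝ :=
  Matrix.of fun u v => if G.Adj u v then 1 else 0

noncomputable def eigMult {V : Type*} [Fintype V] (G : SimpleGraph V) (μ : ℝ) : ℕ :=
  Module.finrank ℝ (Module.End.eigenspace (adjMat G).mulVecLin μ)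

def HasEig {V : Type*} [Fintype V] (G : SimpleGraph V) (μ : ℝ) : Prop :=
  Module.End.HasEigenvalue (adjMat G).mulVecLin μ

def IsMatchingSet {V : Type*} (G : SimpleGraph V) (M : Finset (Sym2 V)) : Prop :=
  (∀ e ∈ M, e ∈ G.edgeSet) ∧
  ∀ e ∈ M, ∀ f ∈ M, e ≠ f → ∀ v, v ∈ e → v ∉ f

def IsInducedMatchingSet {V : Type*} (G : SimpleGraph V) (M : Finset (Sym2 V)) : Prop :=
  IsMatchingSet G M ∧
  ∀ e ∈ M, ∀ f ∈ M, e ≠ f → ∀ u v, u ∈ e → v ∈ f → ¬ G.Adj u v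

noncomputable def matchNum {V : Type*} [Fintype V] (G : SimpleGraph V) : ℕ :=
  sSup {k | ∃ M, IsMatchingSet G M ∧ M.card = k}

noncomputable def indMatchNum {V : Type*} [Fintype V] (G : SimpleGraph V) : ℕ :=
  sSup {k | ∃ M, IsInducedMatchingSet G M ∧ M.card = k}

noncomputable def cyclomatic {V : Type*} [Fintype V] (G : SimpleGraph V) : ℕ :=
  G.edgeSet.ncard + 1 - Fintype.card V

def delV {V : Type*} (G : SimpleGraph V) (v : V) : SimpleGraph {u : V // u ≠ v} :=
  G.induce {u : V | u ≠ v}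

def starGraph (n : ℕ) : SimpleGraph (Fin (n + 1)) :=
  SimpleGraph.fromRel (fun u _ => u = 0)

def triStar (a : ℕ) : SimpleGraph (Fin 3 ⊕ Fin 3 × Fin a) :=
  SimpleGraph.fromRel (fun x y =>
    (∃ i j, x = Sum.inl i ∧ y = Sum.inl j) ∨
    (∃ i k, x = Sum.inl i ∧ y = Sum.inr (i, k)))

/-!
The bound is generalised to `m_μ(H) + |V(H)| ≤ β'(H) + |E(H)| + ω(H)` for every graph `H` with
`ω(H)` components (the claim is the case `ω = 1`) and proved by induction on `|V(H)|`. An edgeless graph has no nonzero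
eigenvalue. If a vertex `v` lies on a cycle, delete it: the multiplicity drops by at most one, `β'`
does not grow, `deg v` edges disappear, and at most `deg v - 2` components are created because two
neighbours of `v` stay connected. If `H` is a forest, the start `v₀ v₁ v₂` of a longest path gives a
leaf `v₀` such that every neighbour of `v₁` other than `v₂` is a leaf; delete the closed
neighbourhood of `v₁`. Since `μ ≠ 0`, the eigenvalue equations at these leaves and at `v₁` force an
eigenvector vanishing at `v₀` to vanish on the whole neighbourhood, so the multiplicity again drops
by at most one, while `v₀v₁` enlarges every induced matching of the rest.
-/

open SimpleGraph

section Spectral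

variable {V : Type*} [Fintype V] (H : SimpleGraph V) {μ : ℝ}

lemma adjMat_eq_adjMatrix : adjMat H = H.adjMatrix ℝ := rfl

lemma sum_neighborFinset_eq_of_mem_eigenspace {x : V → ℝ}
    (hx : x ∈ Module.End.eigenspace (adjMat H).mulVecLin μ) (p : V) :
    ∑ w ∈ H.neighborFinset p, x w = μ * x p := by
  rw [Module.End.mem_eigenspace_iff, Matrix.mulVecLin_apply] at hx
  simpa [adjMat_eq_adjMatrix, adjMatrix_mulVec_apply] using congrFun hx p

lemma apply_eq_mul_of_mem_eigenspace_of_leaf {x : V → ℝ}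
    (hx : x ∈ Module.End.eigenspace (adjMat H).mulVecLin μ) {w v : V} (hwv : H.Adj w v)
    (hleaf : ∀ z, H.Adj w z → z = v) : x v = μ * x w := by
  have hN : H.neighborFinset w = {v} := by
    ext z
    simpa using ⟨hleaf z, fun h => h ▸ hwv⟩
  simpa [hN] using sum_neighborFinset_eq_of_mem_eigenspace H hx w

lemma adjMat_induce_mulVec_restrict (S : Set V) {x : V → ℝ} (hx : ∀ s ∈ S, x s = 0) :
    (adjMat (H.induce Sᶜ)).mulVec (fun u : ↥Sᶜ => x u) =
      fun u : ↥Sᶜ => (adjMat H).mulVec x u := by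
  ext u
  simp only [Matrix.mulVec, dotProduct]
  rw [← Fintype.sum_subtype_add_sum_subtype (· ∈ Sᶜ) (fun w => adjMat H u w * x w),
    Fintype.sum_eq_zero (fun w : {w // w ∉ Sᶜ} => adjMat H u w * x w)
      (fun w => by rw [hx w (by simpa using w.2), mul_zero]), add_zero]
  rfl

lemma adjMat_bot : adjMat (⊥ : SimpleGraph V) = 0 := by
  ext
  simp [adjMat]

lemma eigMult_bot (hμ : μ ≠ 0) : eigMult (⊥ : SimpleGraph V) μ = 0 := by
  have hbot : Module.End.eigenspace (adjMat (⊥ : SimpleGraph V)).mulVecLin μ = ⊥ := by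
    ext x
    simp [adjMat_bot, eq_comm (a := (0 : V → ℝ)), hμ]
  rw [eigMult, hbot, finrank_bot]

lemma restrict_mem_eigenspace_induce_compl (S : Set V) {x : V → ℝ}
    (hx : x ∈ Module.End.eigenspace (adjMat H).mulVecLin μ) (hxS : ∀ s ∈ S, x s = 0) :
    (fun u : ↥Sᶜ => x u) ∈ Module.End.eigenspace (adjMat (H.induce Sᶜ)).mulVecLin μ := by
  rw [Module.End.mem_eigenspace_iff, Matrix.mulVecLin_apply] at hx ⊢
  rw [adjMat_induce_mulVec_restrict H S hxS, hx]
  rfl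

/-- Restriction to `Sᶜ` embeds the hyperplane `x t = 0` of the `μ`-eigenspace of `H` into the
`μ`-eigenspace of `H - S`. -/
lemma eigMult_le_eigMult_induce_compl_add_one (S : Set V) (t : V)
    (hforce : ∀ x ∈ Module.End.eigenspace (adjMat H).mulVecLin μ, x t = 0 → ∀ s ∈ S, x s = 0) :
    eigMult H μ ≤ eigMult (H.induce Sᶜ) μ + 1 := by
  set W := Module.End.eigenspace (adjMat H).mulVecLin μ
  set W' := Module.End.eigenspace (adjMat (H.induce Sᶜ)).mulVecLin μ
  let ev : W →ₗ[ℝ] ℝ := (LinearMap.proj t).comp W.subtype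
  let restrict : LinearMap.ker ev →ₗ[ℝ] W' :=
    { toFun := fun x => ⟨fun u => (x : W).1 u,
        restrict_mem_eigenspace_induce_compl H S (x : W).2 (hforce _ (x : W).2 x.2)⟩
      map_add' := fun _ _ => rfl
      map_smul' := fun _ _ => rfl }
  have hinj : Function.Injective restrict := by
    intro a b hab
    ext v
    by_cases hv : v ∈ S
    · rw [hforce _ (a : W).2 a.2 v hv, hforce _ (b : W).2 b.2 v hv]
    · exact congrFun (congrArg Subtype.val hab) ⟨v, hv⟩
  have hrange : finrank ℝ (LinearMap.range ev) ≤ 1 := by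
    simpa using Submodule.finrank_le (LinearMap.range ev)
  have hrank := LinearMap.finrank_range_add_finrank_ker ev
  have hker := LinearMap.finrank_le_finrank_of_injective hinj
  change finrank ℝ W ≤ finrank ℝ W' + 1
  omega

end Spectral

section InducedMatching

variable {V W : Type*} {H : SimpleGraph V} {G' : SimpleGraph W}

lemma IsInducedMatchingSet.map {M : Finset (Sym2 W)} (hM : IsInducedMatchingSet G' M)
    (f : G' ↪g H) : IsInducedMatchingSet H (M.map f.toEmbedding.sym2Map) := by
  obtain ⟨⟨hedge, hdisj⟩, hind⟩ := hM
  refine ⟨⟨?_, ?_⟩, ?_⟩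
  · simp only [Finset.mem_map, forall_exists_index, and_imp]
    rintro _ e he rfl
    exact (f.map_mem_edgeSet_iff).mpr (hedge e he)
  · simp only [Finset.mem_map, forall_exists_index, and_imp]
    rintro _ e he rfl _ g hg rfl hne v hve hvg
    simp only [Function.Embedding.sym2Map_apply, Sym2.mem_map] at hve hvg
    obtain ⟨a, ha, rfl⟩ := hve
    obtain ⟨b, hb, hba⟩ := hvg
    rw [f.injective hba] at hb
    exact hdisj e he g hg (fun h => hne (h ▸ rfl)) a ha hb
  · simp only [Finset.mem_map, forall_exists_index, and_imp]
    rintro _ e he rfl _ g hg rfl hne u v hue hvg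
    simp only [Function.Embedding.sym2Map_apply, Sym2.mem_map] at hue hvg
    obtain ⟨a, ha, rfl⟩ := hue
    obtain ⟨b, hb, rfl⟩ := hvg
    exact fun h => hind e he g hg (fun h => hne (h ▸ rfl)) a b ha hb (f.map_adj_iff.mp h)

lemma IsInducedMatchingSet.insert {M : Finset (Sym2 V)} (hM : IsInducedMatchingSet H M)
    {a b : V} (hab : H.Adj a b)
    (hfar : ∀ e ∈ M, ∀ v ∈ e, ∀ c ∈ s(a, b), c ≠ v ∧ ¬H.Adj c v) :
    IsInducedMatchingSet H (insert s(a, b) M) := by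
  obtain ⟨⟨hedge, hdisj⟩, hind⟩ := hM
  refine ⟨⟨?_, ?_⟩, ?_⟩
  · simp only [Finset.mem_insert, forall_eq_or_imp]
    exact ⟨hab, hedge⟩
  · simp only [Finset.mem_insert, forall_eq_or_imp]
    refine ⟨⟨fun h => absurd rfl h, fun g hg _ v hv hvg => (hfar g hg v hvg v hv).1 rfl⟩,
      fun e he => ⟨fun _ v hve hv => (hfar e he v hve v hv).1 rfl, hdisj e he⟩⟩
  · simp only [Finset.mem_insert, forall_eq_or_imp]
    refine ⟨⟨fun h => absurd rfl h, fun g hg _ u v hu hvg => (hfar g hg v hvg u hu).2⟩,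
      fun e he => ⟨fun _ u v hue hv huv => (hfar e he u hue v hv).2 huv.symm, hind e he⟩⟩

lemma indMatchNum_bddAbove [Fintype V] (H : SimpleGraph V) :
    BddAbove {k | ∃ M, IsInducedMatchingSet H M ∧ M.card = k} :=
  ⟨Fintype.card (Sym2 V), by rintro k ⟨M, -, rfl⟩; exact M.card_le_univ⟩

lemma IsInducedMatchingSet.card_le_indMatchNum [Fintype V] {M : Finset (Sym2 V)}
    (hM : IsInducedMatchingSet H M) : M.card ≤ indMatchNum H :=
  le_csSup (indMatchNum_bddAbove H) ⟨M, hM, rfl⟩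

lemma exists_isInducedMatchingSet_card_eq [Fintype V] (H : SimpleGraph V) :
    ∃ M, IsInducedMatchingSet H M ∧ M.card = indMatchNum H :=
  Nat.sSup_mem (s := {k | ∃ M, IsInducedMatchingSet H M ∧ M.card = k})
    ⟨0, ∅, ⟨⟨by simp, by simp⟩, by simp⟩, rfl⟩ (indMatchNum_bddAbove H)

lemma indMatchNum_le_of_embedding [Fintype V] [Fintype W] (f : G' ↪g H) :
    indMatchNum G' ≤ indMatchNum H := by
  obtain ⟨M, hM, hcard⟩ := exists_isInducedMatchingSet_card_eq G'
  simpa [hcard] using (hM.map f).card_le_indMatchNum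

lemma indMatchNum_add_one_le_of_embedding [Fintype V] [Fintype W] (f : G' ↪g H) {a b : V}
    (hab : H.Adj a b) (hfar : ∀ w, ∀ c ∈ s(a, b), ¬H.Adj c (f w)) :
    indMatchNum G' + 1 ≤ indMatchNum H := by
  obtain ⟨M, hM, hcard⟩ := exists_isInducedMatchingSet_card_eq G'
  have hfar' : ∀ e ∈ M.map f.toEmbedding.sym2Map, ∀ v ∈ e, ∀ c ∈ s(a, b),
      c ≠ v ∧ ¬H.Adj c v := by
    simp only [Finset.mem_map, forall_exists_index, and_imp]
    rintro _ e - rfl v hv c hc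
    simp only [Function.Embedding.sym2Map_apply, Sym2.mem_map] at hv
    obtain ⟨w, -, rfl⟩ := hv
    refine ⟨?_, hfar w c hc⟩
    rintro rfl
    rcases Sym2.mem_iff.mp hc with rfl | rfl
    · exact hfar w b (Sym2.mem_mk_right _ _) hab.symm
    · exact hfar w a (Sym2.mem_mk_left _ _) hab
  have hnew : s(a, b) ∉ M.map f.toEmbedding.sym2Map :=
    fun h => (hfar' _ h a (Sym2.mem_mk_left _ _) a (Sym2.mem_mk_left _ _)).1 rfl
  have := ((hM.map f).insert hab hfar').card_le_indMatchNum
  rwa [Finset.card_insert_of_notMem hnew, Finset.card_map, hcard] at this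

end InducedMatching

section Counting

variable {V : Type*}

lemma SimpleGraph.Walk.exists_adj_of_mem_of_notMem {H : SimpleGraph V} {S : Set V} {x z : V}
    (p : H.Walk x z) (hx : x ∉ S) (hz : z ∈ S) :
    ∃ w : ↥Sᶜ, (∃ y ∈ S, H.Adj w y) ∧ (H.induce Sᶜ).Reachable ⟨x, hx⟩ w := by
  induction p with
  | nil => exact absurd hz hx
  | @cons a b c hab q ih =>
    by_cases hb : b ∈ S
    · exact ⟨⟨a, hx⟩, ⟨b, hb, hab⟩, Reachable.refl _⟩
    · obtain ⟨w, hw, hreach⟩ := ih hb hz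
      exact ⟨w, hw, (show (H.induce Sᶜ).Adj ⟨a, hx⟩ ⟨b, hb⟩ from hab).reachable.trans hreach⟩

lemma card_connectedComponent_bot :
    Nat.card (⊥ : SimpleGraph V).ConnectedComponent = Nat.card V :=
  (Nat.card_eq_of_bijective _ ⟨fun _ _ h => reachable_bot.mp (ConnectedComponent.exact h),
    fun C => C.exists_rep⟩).symm

variable [Finite V] (H : SimpleGraph V)

lemma ncard_edgeSet_induce_compl_add_ncard_le (S : Set V) {F : Set (Sym2 V)}
    (hF : F ⊆ H.edgeSet) (hFS : ∀ e ∈ F, ∃ v ∈ e, v ∈ S) :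
    (H.induce Sᶜ).edgeSet.ncard + F.ncard ≤ H.edgeSet.ncard := by
  have hinj : Set.InjOn (Sym2.map ((↑) : ↥Sᶜ → V)) (H.induce Sᶜ).edgeSet :=
    (Sym2.map.injective Subtype.val_injective).injOn
  have hmaps : Set.MapsTo (Sym2.map ((↑) : ↥Sᶜ → V)) (H.induce Sᶜ).edgeSet (H.edgeSet \ F) := by
    intro e he
    refine ⟨(Embedding.induce Sᶜ).map_mem_edgeSet_iff.mpr he, fun heF => ?_⟩
    obtain ⟨v, hv, hvS⟩ := hFS _ heF
    obtain ⟨u, -, rfl⟩ := Sym2.mem_map.mp hv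
    exact u.2 hvS
  have hle := Set.ncard_le_ncard_of_injOn _ hmaps hinj
  have hsplit := Set.ncard_sdiff_add_ncard_of_subset hF
  omega

/-- Components of `H - S` outside the component `K₀` of `d` are components of `H`; each one inside
`K₀` is entered from `S` and so contains a vertex of `R`. -/
lemma card_connectedComponent_induce_compl_add_one_le (S : Set V) {d : V} (hd : d ∈ S)
    (hS : ∀ s ∈ S, H.Reachable s d) (R : Finset V)
    (hR : ∀ w : ↥Sᶜ, (∃ y ∈ S, H.Adj w y) → ∃ r : ↥Sᶜ, ↑r ∈ R ∧ (H.induce Sᶜ).Reachable w r) :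
    Nat.card (H.induce Sᶜ).ConnectedComponent + 1 ≤ Nat.card H.ConnectedComponent + R.card := by
  set φ := ConnectedComponent.map (Embedding.induce Sᶜ).toHom
  set K₀ := H.connectedComponentMk d
  set A := {C | φ C ≠ K₀}
  have hA : A.ncard + 1 ≤ Nat.card H.ConnectedComponent := by
    have hmaps : Set.MapsTo φ A {K₀}ᶜ := fun _ hC => hC
    have hinj : Set.InjOn φ A := by
      intro C₁ hC₁ C₂ _ hφ
      induction C₁ using ConnectedComponent.ind with | h x₁ =>
      induction C₂ using ConnectedComponent.ind with | h x₂ =>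
      simp only [A, φ, ConnectedComponent.map_mk, Set.mem_ofPred_eq] at hφ hC₁
      obtain ⟨p⟩ := ConnectedComponent.exact hφ
      have hp : ∀ v ∈ p.support, v ∈ Sᶜ := fun v hv hvS =>
        hC₁ (ConnectedComponent.sound (Reachable.trans ⟨p.takeUntil v hv⟩ (hS v hvS)))
      exact ConnectedComponent.sound ⟨p.induce Sᶜ hp⟩
    have hle := Set.ncard_le_ncard_of_injOn φ hmaps hinj
    rw [Set.ncard_compl, Set.ncard_singleton] at hle
    have hpos : 0 < Nat.card H.ConnectedComponent := Nat.card_pos_iff.mpr ⟨⟨K₀⟩, inferInstance⟩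
    omega
  have hAc : Aᶜ.ncard ≤ R.card := by
    have hsub : Aᶜ ⊆ (H.induce Sᶜ).connectedComponentMk '' (Subtype.val ⁻¹' (R : Set V)) := by
      intro C hC
      induction C using ConnectedComponent.ind with | h x =>
      simp only [A, φ, Set.mem_compl_iff, Set.mem_ofPred_eq, not_not,
        ConnectedComponent.map_mk] at hC
      obtain ⟨p⟩ := ConnectedComponent.exact hC
      obtain ⟨w, hw, hxw⟩ := p.exists_adj_of_mem_of_notMem x.2 hd
      obtain ⟨r, hr, hwr⟩ := hR w hw
      exact ⟨r, hr, ConnectedComponent.sound (hxw.trans hwr).symm⟩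
    calc Aᶜ.ncard
        ≤ (Subtype.val ⁻¹' (R : Set V) : Set ↥Sᶜ).ncard :=
          (Set.ncard_le_ncard hsub).trans (Set.ncard_image_le)
      _ = (Subtype.val '' (Subtype.val ⁻¹' (R : Set V)) : Set V).ncard :=
          (Set.ncard_image_of_injective _ Subtype.val_injective).symm
      _ ≤ R.card := (Set.ncard_le_ncard (Set.image_preimage_subset _ _)).trans_eq
          (Set.ncard_coe_finset R)
  have hsplit := Set.ncard_add_ncard_compl A
  omega

end Counting

namespace SimpleGraph

variable {V : Type*} {H : SimpleGraph V}

lemma exists_adj_adj_walk_notMem_support_of_not_isAcyclic (hH : ¬H.IsAcyclic) :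
    ∃ v u w, H.Adj v u ∧ H.Adj v w ∧ u ≠ w ∧ ∃ q : H.Walk u w, v ∉ q.support := by
  simp only [IsAcyclic, not_forall, not_not] at hH
  obtain ⟨v, c, hc⟩ := hH
  cases c with
  | nil => exact (Walk.not_isCycle_nil hc).elim
  | cons hvu p =>
    have hnil : ¬p.Nil := fun h => hvu.ne h.eq.symm
    refine ⟨v, _, p.penultimate, hvu, (Walk.adj_penultimate hnil).symm, ?_, p.dropLast, ?_⟩
    · simpa [Walk.penultimate_cons_of_not_nil _ _ hnil] using hc.snd_ne_penultimate
    · have hp : (p.dropLast.concat (Walk.adj_penultimate hnil)).IsPath := by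
        rw [Walk.concat_dropLast]
        exact ((Walk.cons_isCycle_iff p hvu).mp hc).1
      exact ((Walk.concat_isPath_iff _).mp hp).2

lemma exists_longest_path [Fintype V] {a b : V} (hab : H.Adj a b) :
    ∃ (x y : V) (p : H.Walk x y), p.IsPath ∧ 0 < p.length ∧
      ∀ (x' y' : V) (p' : H.Walk x' y'), p'.IsPath → p'.length ≤ p.length := by
  let P : ℕ → Prop := fun l => ∃ (x y : V) (p : H.Walk x y), p.IsPath ∧ p.length = l
  have hedge : P 1 := ⟨a, b, .cons hab .nil, by simp [hab.ne], rfl⟩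
  have hbound : ∀ l, P l → l ≤ Fintype.card V := by
    rintro _ ⟨x, y, p, hp, rfl⟩
    exact hp.length_lt.le
  obtain ⟨x, y, p, hp, hlen⟩ := Nat.findGreatest_spec (hbound 1 hedge) hedge
  refine ⟨x, y, p, hp, hlen ▸ Nat.le_findGreatest (hbound 1 hedge) hedge,
    fun x' y' p' hp' => hlen ▸ Nat.le_findGreatest (hbound _ ⟨x', y', p', hp', rfl⟩)
      ⟨x', y', p', hp', rfl⟩⟩

/-- A neighbour of the start off the path would extend it; one on the path would close a cycle. -/
lemma IsAcyclic.eq_snd_of_adj_of_longest (hH : H.IsAcyclic) {x y z : V} {p : H.Walk x y}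
    (hp : p.IsPath) (hmax : ∀ (x' y' : V) (p' : H.Walk x' y'), p'.IsPath → p'.length ≤ p.length)
    (hz : H.Adj x z) : z = p.snd := by
  by_cases hzp : z ∈ p.support
  · exact hH.eq_snd_of_adj_start hp hz hzp
  · have := hmax _ _ _ (hp.cons hzp (h := hz.symm))
    simp at this

/-- Along a longest path `v₀ v₁ v₂ …`, every neighbour `w ≠ v₂` of `v₁` starts the longest path
`w v₁ v₂ …`, hence is a leaf. -/
lemma IsAcyclic.exists_pendant_star [Fintype V] (hH : H.IsAcyclic) {a b : V} (hab : H.Adj a b) :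
    ∃ v₀ v₁ v₂, H.Adj v₁ v₀ ∧ H.Adj v₁ v₂ ∧ (∀ z, H.Adj v₀ z → z = v₁) ∧
      ∀ w, H.Adj v₁ w → w ≠ v₂ → ∀ z, H.Adj w z → z = v₁ := by
  obtain ⟨x, y, p, hp, hpos, hmax⟩ := exists_longest_path hab
  cases p with
  | nil => simp at hpos
  | @cons _ v₁ _ h q =>
    have hleaf₀ := fun z (hz : H.Adj x z) => hH.eq_snd_of_adj_of_longest hp hmax hz
    simp only [Walk.snd_cons] at hleaf₀
    cases q with
    | nil =>
      have hleaf₁ := fun z (hz : H.Adj y z) => hH.eq_snd_of_adj_of_longest hp.reverse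
        (by simpa using hmax) hz
      simp only [Walk.reverse_cons, Walk.reverse_nil, Walk.nil_append, Walk.snd_cons] at hleaf₁
      exact ⟨x, _, x, h.symm, h.symm, hleaf₀, fun w hw hne => absurd (hleaf₁ w hw) hne⟩
    | @cons _ v₂ _ h₂ r =>
      refine ⟨x, v₁, v₂, h.symm, h₂, hleaf₀, fun w hw hne z hz => ?_⟩
      have hq := ((Walk.cons_isPath_iff h _).mp hp).1
      have hwq : w ∉ (Walk.cons h₂ r).support := fun hwq =>
        hne (by simpa using hH.eq_snd_of_adj_start hq hw hwq)
      simpa using hH.eq_snd_of_adj_of_longest (hq.cons hwq (h := hw.symm)) (by simpa using hmax) hz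

lemma ncard_neighborSet [Fintype V] (H : SimpleGraph V) (v : V) :
    (H.neighborSet v).ncard = H.degree v := by
  rw [← Nat.card_coe_set_eq, Nat.card_eq_fintype_card, card_neighborSet_eq_degree]

lemma ncard_incidenceSet [Fintype V] (H : SimpleGraph V) (v : V) :
    (H.incidenceSet v).ncard = H.degree v := by
  rw [← Nat.card_coe_set_eq, Nat.card_eq_fintype_card, card_incidenceSet_eq_degree]

end SimpleGraph

section Induction

variable {V : Type*} [Fintype V]

/-- `m_μ(H) ≤ β'(H) + c(H)` for a graph with `ω(H)` components, whose cyclomatic number is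
`c(H) = |E(H)| - |V(H)| + ω(H)`; stated without subtraction. -/
def CyclomaticBound (H : SimpleGraph V) (μ : ℝ) : Prop :=
  eigMult H μ + Fintype.card V ≤ indMatchNum H + H.edgeSet.ncard + Nat.card H.ConnectedComponent

variable {H : SimpleGraph V} {μ : ℝ}

lemma cyclomaticBound_bot (hμ : μ ≠ 0) : CyclomaticBound (⊥ : SimpleGraph V) μ := by
  rw [CyclomaticBound, eigMult_bot hμ, card_connectedComponent_bot, Nat.card_eq_fintype_card]
  omega

lemma CyclomaticBound.of_induce_compl (S : Set V) (k r : ℕ)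
    (hS : CyclomaticBound (H.induce Sᶜ) μ)
    (heig : eigMult H μ ≤ eigMult (H.induce Sᶜ) μ + 1)
    (hmatch : indMatchNum (H.induce Sᶜ) + k ≤ indMatchNum H)
    (hcomp : Nat.card (H.induce Sᶜ).ConnectedComponent + 1 ≤ Nat.card H.ConnectedComponent + r)
    (hedge : (H.induce Sᶜ).edgeSet.ncard + S.ncard + r ≤ H.edgeSet.ncard + k) :
    CyclomaticBound H μ := by
  have hcard : Fintype.card ↥Sᶜ + S.ncard = Fintype.card V := by
    rw [← Nat.card_eq_fintype_card, Nat.card_coe_set_eq, Set.ncard_compl_add_ncard,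
      Nat.card_eq_fintype_card]
  unfold CyclomaticBound at hS ⊢
  omega

lemma CyclomaticBound.of_induce_compl_singleton {v u w : V} (hvu : H.Adj v u) (hvw : H.Adj v w)
    (huw : u ≠ w) (q : H.Walk u w) (hq : v ∉ q.support)
    (hv : CyclomaticBound (H.induce {v}ᶜ) μ) : CyclomaticBound H μ := by
  refine hv.of_induce_compl {v} 0 (H.degree v - 1)
    (eigMult_le_eigMult_induce_compl_add_one H {v} v fun x _ hx s hs => hs ▸ hx)
    (indMatchNum_le_of_embedding (Embedding.induce _)) ?_ ?_
  · refine card_connectedComponent_induce_compl_add_one_le H {v} rfl (fun s hs => hs ▸ .rfl)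
      ((H.neighborFinset v).erase u) ?_ |>.trans_eq ?_
    · rintro x ⟨y, hy, hxy⟩
      rw [Set.mem_singleton_iff] at hy
      subst y
      by_cases hxu : (x : V) = u
      · refine ⟨⟨w, hvw.ne'⟩, by simp [huw.symm, hvw], ?_⟩
        have hq' : ∀ z ∈ q.support, z ∈ ({v}ᶜ : Set V) := fun z hz hzv => hq (hzv ▸ hz)
        obtain ⟨x, hx⟩ := x
        subst hxu
        exact ⟨q.induce _ hq'⟩
      · exact ⟨x, by simp [hxu, hxy.symm], .rfl⟩
    · rw [Finset.card_erase_of_mem (by simpa using hvu), card_neighborFinset_eq_degree]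
  · have hE := ncard_edgeSet_induce_compl_add_ncard_le H {v} (H.incidenceSet_subset v)
      fun e he => ⟨v, he.2, rfl⟩
    rw [ncard_incidenceSet] at hE
    have := hvu.degree_pos_left
    rw [Set.ncard_singleton]
    omega

lemma CyclomaticBound.of_induce_compl_pendant_star (hμ : μ ≠ 0) {v₀ v₁ v₂ : V}
    (h₁₀ : H.Adj v₁ v₀) (h₁₂ : H.Adj v₁ v₂) (hleaf₀ : ∀ z, H.Adj v₀ z → z = v₁)
    (hleaf : ∀ w, H.Adj v₁ w → w ≠ v₂ → ∀ z, H.Adj w z → z = v₁)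
    -- `S` is kept abstract: for the literal set, `Fintype ↥Sᶜ` would be built from a different
    -- `Decidable` instance than the one in the induction hypothesis
    (S : Set V) (hS_eq : S = insert v₁ (H.neighborSet v₁))
    (hS : CyclomaticBound (H.induce Sᶜ) μ) : CyclomaticBound H μ := by
  have hmemS : ∀ {s}, H.Adj v₁ s → s ∈ S := fun h => hS_eq ▸ Set.mem_insert_of_mem _ h
  refine hS.of_induce_compl S 1 (H.degree v₂ - 1) ?_ ?_ ?_ ?_
  · refine eigMult_le_eigMult_induce_compl_add_one H S v₀ fun x hx hx₀ => ?_
    have hx₁ : x v₁ = 0 := by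
      rw [apply_eq_mul_of_mem_eigenspace_of_leaf H hx h₁₀.symm hleaf₀, hx₀, mul_zero]
    have hxw : ∀ w, H.Adj v₁ w → w ≠ v₂ → x w = 0 := fun w hw hne => by
      have := apply_eq_mul_of_mem_eigenspace_of_leaf H hx hw.symm (hleaf w hw hne)
      rw [hx₁] at this
      exact (mul_eq_zero.mp this.symm).resolve_left hμ
    have hx₂ : x v₂ = 0 := by
      have := sum_neighborFinset_eq_of_mem_eigenspace H hx v₁
      rwa [Finset.sum_eq_single_of_mem v₂ (by simpa using h₁₂)
        (fun w hw hne => hxw w (by simpa using hw) hne), hx₁, mul_zero] at this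
    rw [hS_eq]
    rintro s (rfl | hs)
    · exact hx₁
    · by_cases hs₂ : s = v₂
      · exact hs₂ ▸ hx₂
      · exact hxw s hs hs₂
  · refine indMatchNum_add_one_le_of_embedding (Embedding.induce Sᶜ) h₁₀.symm
      fun w c hc hadj => w.2 ?_
    rcases Sym2.mem_iff.mp hc with rfl | rfl
    · rw [show (w : V) = v₁ from hleaf₀ _ hadj, hS_eq]
      exact Set.mem_insert _ _
    · exact hmemS hadj
  · refine card_connectedComponent_induce_compl_add_one_le H S (hS_eq ▸ Set.mem_insert _ _) ?_
      ((H.neighborFinset v₂).erase v₁) ?_ |>.trans_eq ?_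
    · rw [hS_eq]
      rintro s (rfl | hs)
      exacts [.rfl, (Adj.reachable hs).symm]
    · have hv₁ : v₁ ∈ S := hS_eq ▸ Set.mem_insert _ _
      rintro x ⟨y, hy, hxy⟩
      rw [hS_eq] at hy
      obtain rfl | hy := hy
      · exact absurd (hmemS hxy.symm) x.2
      · refine ⟨x, ?_, .rfl⟩
        by_cases hy₂ : y = v₂
        · subst y
          exact Finset.mem_erase.mpr ⟨fun hx => x.2 (hx ▸ hv₁), by simpa using hxy.symm⟩
        · exact absurd (hleaf y hy hy₂ x hxy.symm ▸ hv₁) x.2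
    · rw [Finset.card_erase_of_mem (by simpa using h₁₂.symm), card_neighborFinset_eq_degree]
  · have hE := ncard_edgeSet_induce_compl_add_ncard_le H S
      (Set.union_subset (H.incidenceSet_subset v₁) (H.incidenceSet_subset v₂)) (by
        rintro e (he | he)
        exacts [⟨v₁, he.2, hS_eq ▸ Set.mem_insert _ _⟩, ⟨v₂, he.2, hmemS h₁₂⟩])
    have hF := Set.ncard_union_add_ncard_inter (H.incidenceSet v₁) (H.incidenceSet v₂)
    rw [H.incidenceSet_inter_incidenceSet_of_adj h₁₂, Set.ncard_singleton, ncard_incidenceSet,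
      ncard_incidenceSet] at hF
    have hSc : S.ncard = H.degree v₁ + 1 := by
      rw [hS_eq, Set.ncard_insert_of_notMem (fun h => h.ne rfl), ncard_neighborSet]
    have := h₁₂.degree_pos_right
    omega

end Induction

theorem cyclomaticBound {V : Type*} [Fintype V] (H : SimpleGraph V) {μ : ℝ} (hμ : μ ≠ 0) :
    CyclomaticBound H μ := by
  induction hn : Fintype.card V using Nat.strong_induction_on generalizing V with
  | _ n ih =>
  by_cases hE : ∃ a b, H.Adj a b
  · obtain ⟨a, b, hab⟩ := hE
    by_cases hacyc : H.IsAcyclic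
    · obtain ⟨v₀, v₁, v₂, h₁₀, h₁₂, hleaf₀, hleaf⟩ := hacyc.exists_pendant_star hab
      obtain ⟨S, hS_eq⟩ : ∃ S, S = insert v₁ (H.neighborSet v₁) := ⟨_, rfl⟩
      exact .of_induce_compl_pendant_star hμ h₁₀ h₁₂ hleaf₀ hleaf S hS_eq
        (ih _ (hn ▸ Fintype.card_subtype_lt (x := v₁) (by simp [hS_eq])) _ rfl)
    · obtain ⟨v, u, w, hvu, hvw, huw, q, hq⟩ :=
        exists_adj_adj_walk_notMem_support_of_not_isAcyclic hacyc
      exact .of_induce_compl_singleton hvu hvw huw q hq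
        (ih _ (hn ▸ Fintype.card_subtype_lt (x := v) (by simp)) _ rfl)
  · simp only [not_exists] at hE
    obtain rfl : H = ⊥ := by
      ext a b
      simp [hE a b]
    exact cyclomaticBound_bot hμ

theorem stmt13_general {V : Type*} [Fintype V] (G : SimpleGraph V) (hc : G.Connected)
    (μ : ℝ) (hμ : μ ≠ 0) :
    eigMult G μ ≤ indMatchNum G + cyclomatic G := by
  have hbound := cyclomaticBound G hμ
  have : Nonempty V := hc.nonempty
  have := hc.preconnected.subsingleton_connectedComponent
  rw [CyclomaticBound, Nat.card_unique] at hbound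
  unfold cyclomatic
  omega

theorem stmt13 {V : Type*} [Fintype V] (G : SimpleGraph V) (hc : G.Connected)
    (μ : ℝ) (hμ : μ ≠ 0) (h : HasEig G μ) :
    eigMult G μ ≤ indMatchNum G + cyclomatic G :=
  stmt13_general G hc μ hμ
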